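/- For every n ≥ 2, the map π ↦ π̌ is a bijection from {π ∈ NCL(n) : π̂ = 1_n} onto {α ∈ NC(n) : 1 and 2 belong to the same block of α}. -/

import Mathlib

open scoped Classical

/-- The minimum of a finset of naturals (`0` if empty). -/
noncomputable def fmin (A : Finset ℕ) : ℕ := sInf (A : Set ℕ)

/-- The maximum of a finset of naturals (`0` if empty). -/
noncomputable def fmax (A : Finset ℕ) : ℕ := sSup (A : Set ℕ)

/-- `α` is a partition of the finite set `F ⊆ ℕ`. -/
def IsPartitionOfSet (F : Finset ℕ) (α : Finset (Finset ℕ)) : Prop :=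
  (∀ V ∈ α, V.Nonempty) ∧ (∀ V ∈ α, V ⊆ F) ∧ (∀ m ∈ F, ∃ V ∈ α, m ∈ V) ∧
    ∀ V ∈ α, ∀ W ∈ α, V ≠ W → V ∩ W = ∅

/-- `α` is a partition of `{1,…,n}`. -/
def IsPartitionOf (n : ℕ) (α : Finset (Finset ℕ)) : Prop :=
  IsPartitionOfSet (Finset.Icc 1 n) α

/-- Two distinct blocks of the family `π` cross: there are `a < b < c < d` with
`a, c` in one block and `b, d` in a different block. -/
def IsCrossing (π : Finset (Finset ℕ)) : Prop :=
  ∃ A ∈ π, ∃ B ∈ π, A ≠ B ∧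
    ∃ a ∈ A, ∃ b ∈ B, ∃ c ∈ A, ∃ d ∈ B, a < b ∧ b < c ∧ c < d

/-- `α ∈ NC(n)`: a non-crossing partition of `{1,…,n}`. -/
def IsNCPartition (n : ℕ) (α : Finset (Finset ℕ)) : Prop :=
  IsPartitionOf n α ∧ ¬ IsCrossing α

/-- Reverse refinement order `α ≤ β`: every block of `α` is contained in a block of `β`
(equivalently, every block of `β` is a union of blocks of `α`). -/
def Refines (α β : Finset (Finset ℕ)) : Prop := ∀ V ∈ α, ∃ W ∈ β, V ⊆ W

/-- The partial order `α ≪ β`: `α ≤ β` and for every block `W` of `β` there is a block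
`V` of `α` containing both `min W` and `max W`. -/
def LL (α β : Finset (Finset ℕ)) : Prop :=
  Refines α β ∧ ∀ W ∈ β, ∃ V ∈ α, fmin W ∈ V ∧ fmax W ∈ V

/-- A block `V` (of `α`) is `β`-special: some block `W` of `β` has the same min and max. -/
def SpecialBlock (β : Finset (Finset ℕ)) (V : Finset ℕ) : Prop :=
  ∃ W ∈ β, fmin V = fmin W ∧ fmax V = fmax W

/-- `V` is an outer block of `α`: no block of `α` strictly nests around it. -/
def OuterBlock (α : Finset (Finset ℕ)) (V : Finset ℕ) : Prop :=
  ∀ V' ∈ α, ¬ (fmin V' < fmin V ∧ fmax V < fmax V')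

/-- `π` is a linked partition of the finite set `F ⊆ ℕ`. -/
def IsLinkedPartitionOfSet (F : Finset ℕ) (π : Finset (Finset ℕ)) : Prop :=
  (∀ A ∈ π, A.Nonempty) ∧ (∀ A ∈ π, A ⊆ F) ∧ (∀ m ∈ F, ∃ A ∈ π, m ∈ A) ∧
    ∀ A ∈ π, ∀ B ∈ π, A ≠ B →
      A ∩ B = ∅ ∨
        (2 ≤ A.card ∧ 2 ≤ B.card ∧ (A ∩ B).card = 1 ∧ fmin A ≠ fmin B ∧
          ∀ x ∈ A ∩ B, x = fmin A ∨ x = fmin B)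

/-- `π ∈ NCL(F)`: a non-crossing linked partition of the finite set `F`. -/
def IsNCLOfSet (F : Finset ℕ) (π : Finset (Finset ℕ)) : Prop :=
  IsLinkedPartitionOfSet F π ∧ ¬ IsCrossing π

/-- `π ∈ NCL(n)`: a non-crossing linked partition of `{1,…,n}`. -/
def IsNCL (n : ℕ) (π : Finset (Finset ℕ)) : Prop :=
  IsNCLOfSet (Finset.Icc 1 n) π

/-- The number of blocks of `π` containing `m`. -/
noncomputable def coverCount (π : Finset (Finset ℕ)) (m : ℕ) : ℕ :=
  (π.filter fun A => m ∈ A).card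

/-- `m` is singly-covered by `π`: it lies in exactly one block. -/
def SinglyCovered (π : Finset (Finset ℕ)) (m : ℕ) : Prop := coverCount π m = 1

/-- `m` is doubly-covered by `π`: it lies in exactly two blocks. -/
def DoublyCovered (π : Finset (Finset ℕ)) (m : ℕ) : Prop := coverCount π m = 2

/-- The partition `π̂` generated by the blocks of `π`: its blocks are the connected
components of the ground set under the relation of lying in a common block of `π`. -/
noncomputable def genPart (π : Finset (Finset ℕ)) : Finset (Finset ℕ) :=
  (π.sup id).image fun m =>
    (π.sup id).filter fun x =>
      Relation.EqvGen (fun a b => ∃ A ∈ π, a ∈ A ∧ b ∈ A) m x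

/-- The unlinking `π̌` of a linked partition `π`. -/
noncomputable def unlink (π : Finset (Finset ℕ)) : Finset (Finset ℕ) :=
  π.image fun A => if SinglyCovered π (fmin A) then A else A.erase (fmin A)

/-- The block of `α` containing `m` (empty if there is none). -/
noncomputable def blockOf (α : Finset (Finset ℕ)) (m : ℕ) : Finset ℕ :=
  (α.filter fun V => m ∈ V).sup id

/-- The successor of `m` in the cycle on the block `V` (elements in increasing order). -/
noncomputable def nextInBlock (V : Finset ℕ) (m : ℕ) : ℕ :=
  if m = fmax V then fmin V else fmin (V.filter fun x => m < x)

/-- The predecessor of `m` in the cycle on the block `V`. -/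
noncomputable def prevInBlock (V : Finset ℕ) (m : ℕ) : ℕ :=
  if m = fmin V then fmax V else fmax (V.filter fun x => x < m)

/-- The permutation `P_α` associated to a partition `α`, as a function: each block
`{i₁ < i₂ < ⋯ < iₘ}` becomes the cycle `i₁ ↦ i₂ ↦ ⋯ ↦ iₘ ↦ i₁`. -/
noncomputable def permOf (α : Finset (Finset ℕ)) (m : ℕ) : ℕ :=
  if m ∈ blockOf α m then nextInBlock (blockOf α m) m else m

/-- The inverse permutation `P_α⁻¹`, as a function. -/
noncomputable def permOfInv (α : Finset (Finset ℕ)) (m : ℕ) : ℕ :=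
  if m ∈ blockOf α m then prevInBlock (blockOf α m) m else m

/-- The action `τ·α` of a map `τ` on a partition `α = {V₁,…,V_p}`, giving
`{τ(V₁),…,τ(V_p)}`. -/
def mapPart (τ : ℕ → ℕ) (α : Finset (Finset ℕ)) : Finset (Finset ℕ) :=
  α.image fun V => V.image τ

/-- The cycled unlinking `π° := P_{π̂}⁻¹ · π̌`. -/
noncomputable def cycUnlink (π : Finset (Finset ℕ)) : Finset (Finset ℕ) :=
  mapPart (permOfInv (genPart π)) (unlink π)

/-- `NC(n)` as a finset. -/
noncomputable def NCF (n : ℕ) : Finset (Finset (Finset ℕ)) :=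
  ((Finset.Icc 1 n).powerset.powerset).filter (IsNCPartition n)

/-- `NCL(n)` as a finset. -/
noncomputable def NCLF (n : ℕ) : Finset (Finset (Finset ℕ)) :=
  ((Finset.Icc 1 n).powerset.powerset).filter (IsNCL n)

/-- The restriction `π|_E`: the blocks of `π` contained in `E`. -/
def restrictL (π : Finset (Finset ℕ)) (E : Finset ℕ) : Finset (Finset ℕ) :=
  π.filter fun A => A ⊆ E

/-- The partition `β₀` obtained from `β` by leaving blocks of size `≤ 2` intact and
breaking each block `W` with `|W| ≥ 3` into the doubleton `{min W, max W}` together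
with `|W| - 2` singletons. -/
noncomputable def breakBlocks (β : Finset (Finset ℕ)) : Finset (Finset ℕ) :=
  β.biUnion fun W =>
    if W.card ≤ 2 then {W}
    else insert {fmin W, fmax W} ((W \ {fmin W, fmax W}).image fun x => ({x} : Finset ℕ))

/-!
Unlinking is undone by `relink`, which adds to every block `V` not containing `1` the point
`min V - 1`; when `2` lies in the block of `1`, all other blocks have minimum at least `3`, and
the result is a connected non-crossing linked partition.

Conversely, in a connected non-crossing linked partition `π` of `{1,…,n}` every block `A` other
than the block of `1` has a doubly covered minimum `m`, and `m + 1 ∈ A`; so `π̌` replaces `A` by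
`A \ {m}`, whose minimum is `m + 1`, and relinking restores `A`. The first fact is a count: the
intersection graph of the blocks is connected, so it has at least `#π - 1` edges, while the common
point of an edge is the minimum of exactly one of its ends, this end determines the edge, and it
is never the block of `1`. The second holds because otherwise, by non-crossing, the open interval
between `m` and the next element of `A` would be a union of blocks, against connectedness.
-/

open Finset

lemma fmin_mem {A : Finset ℕ} (h : A.Nonempty) : fmin A ∈ A :=
  Nat.sInf_mem (s := (A : Set ℕ)) (by exact_mod_cast h)

lemma fmin_le {A : Finset ℕ} {a : ℕ} (h : a ∈ A) : fmin A ≤ a :=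
  Nat.sInf_le (s := (A : Set ℕ)) h

lemma fmin_eq {A : Finset ℕ} {a : ℕ} (ha : a ∈ A) (h : ∀ x ∈ A, a ≤ x) : fmin A = a :=
  le_antisymm (fmin_le ha) (h _ (fmin_mem ⟨a, ha⟩))

lemma fmin_eq_one {n : ℕ} {A : Finset ℕ} (hA : A ⊆ Icc 1 n) (h1 : 1 ∈ A) : fmin A = 1 :=
  fmin_eq h1 fun _ hx => (mem_Icc.1 (hA hx)).1

lemma singlyCovered_iff {π : Finset (Finset ℕ)} {A : Finset ℕ} {m : ℕ} (hA : A ∈ π)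
    (hm : m ∈ A) : SinglyCovered π m ↔ ∀ B ∈ π, m ∈ B → B = A := by
  have hmem : A ∈ π.filter (m ∈ ·) := mem_filter.2 ⟨hA, hm⟩
  rw [SinglyCovered, coverCount, card_eq_one]
  constructor
  · rintro ⟨C, hC⟩ B hB hmB
    have hBC : B ∈ π.filter (m ∈ ·) := mem_filter.2 ⟨hB, hmB⟩
    rw [hC, mem_singleton] at hBC hmem
    rw [hBC, hmem]
  · exact fun h => ⟨A, eq_singleton_iff_unique_mem.2
      ⟨hmem, fun B hB => h B (mem_filter.1 hB).1 (mem_filter.1 hB).2⟩⟩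

/-- The clause of `IsLinkedPartitionOfSet` for two distinct intersecting blocks. -/
def Linked (A B : Finset ℕ) : Prop :=
  2 ≤ #A ∧ 2 ≤ #B ∧ #(A ∩ B) = 1 ∧ fmin A ≠ fmin B ∧ ∀ x ∈ A ∩ B, x = fmin A ∨ x = fmin B

lemma Linked.symm {A B : Finset ℕ} (h : Linked A B) : Linked B A := by
  obtain ⟨hA, hB, hAB, hne, hx⟩ := h
  rw [inter_comm] at hAB hx
  exact ⟨hB, hA, hAB, hne.symm, fun x h => (hx x h).symm⟩

lemma linked_of_inter_eq_singleton {A B : Finset ℕ} (hAB : A ∩ B = {fmin A})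
    (hlt : fmin B < fmin A) (hA : 2 ≤ #A) : Linked A B := by
  have hmem : fmin A ∈ B := (mem_inter.1 (hAB ▸ mem_singleton_self _)).2
  refine ⟨hA, one_lt_card.2 ⟨fmin B, fmin_mem ⟨_, hmem⟩, fmin A, hmem, hlt.ne⟩,
    by rw [hAB, card_singleton], hlt.ne', fun _ hx => Or.inl ?_⟩
  rwa [hAB, mem_singleton] at hx

theorem Relation.EqvGen.iff_of_rel_iff {α : Type*} {r : α → α → Prop} {p : α → Prop}
    (hp : ∀ a b, r a b → (p a ↔ p b)) {a b : α} (hab : Relation.EqvGen r a b) : p a ↔ p b := by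
  induction hab with
  | rel a b h => exact hp a b h
  | refl => rfl
  | symm _ _ _ ih => exact ih.symm
  | trans _ _ _ _ _ ih₁ ih₂ => exact ih₁.trans ih₂

def SameBlock (π : Finset (Finset ℕ)) (a b : ℕ) : Prop := ∃ A ∈ π, a ∈ A ∧ b ∈ A

lemma genPart_eq_singleton_iff {F : Finset ℕ} {π : Finset (Finset ℕ)} (hsup : π.sup id = F)
    (hF : F.Nonempty) :
    genPart π = {F} ↔ ∀ a ∈ F, ∀ b ∈ F, Relation.EqvGen (SameBlock π) a b := by
  unfold genPart
  rw [hsup]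
  change F.image (fun a => F.filter (Relation.EqvGen (SameBlock π) a)) = {F} ↔ _
  constructor
  · intro h a ha b hb
    have hcomp := h ▸ mem_image_of_mem (fun a => F.filter (Relation.EqvGen (SameBlock π) a)) ha
    rw [mem_singleton] at hcomp
    exact (mem_filter.1 (hcomp ▸ hb)).2
  · intro h
    rw [image_congr fun a ha => filter_true_of_mem (h a ha), image_const hF]

def blockGraph (π : Finset (Finset ℕ)) : SimpleGraph π where
  Adj A B := A ≠ B ∧ (A.1 ∩ B.1).Nonempty
  symm := ⟨fun _ _ h => ⟨h.1.symm, inter_comm (α := ℕ) _ _ ▸ h.2⟩⟩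
  loopless := ⟨fun _ h => h.1 rfl⟩

lemma blockGraph_adj {π : Finset (Finset ℕ)} {A B : π} :
    (blockGraph π).Adj A B ↔ A ≠ B ∧ (A.1 ∩ B.1).Nonempty :=
  Iff.rfl

lemma blockGraph_reachable_of_mem {π : Finset (Finset ℕ)} {A B : π} {m : ℕ} (hA : m ∈ A.1)
    (hB : m ∈ B.1) : (blockGraph π).Reachable A B := by
  by_cases hAB : A = B
  · exact hAB ▸ .refl _
  · exact (blockGraph_adj.2 ⟨hAB, m, mem_inter.2 ⟨hA, hB⟩⟩).reachable

noncomputable def unlinkBlock (π : Finset (Finset ℕ)) (A : Finset ℕ) : Finset ℕ :=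
  if SinglyCovered π (fmin A) then A else A.erase (fmin A)

lemma unlink_eq_image (π : Finset (Finset ℕ)) : unlink π = π.image (unlinkBlock π) := rfl

lemma mem_unlinkBlock {π : Finset (Finset ℕ)} {A : Finset ℕ} {m : ℕ} :
    m ∈ unlinkBlock π A ↔ m ∈ A ∧ (m = fmin A → SinglyCovered π (fmin A)) := by
  unfold unlinkBlock
  split_ifs with hs
  · exact ⟨fun hm => ⟨hm, fun _ => hs⟩, And.left⟩
  · rw [mem_erase]; tauto

lemma unlinkBlock_subset {π : Finset (Finset ℕ)} {A : Finset ℕ} : unlinkBlock π A ⊆ A :=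
  fun _ hm => (mem_unlinkBlock.1 hm).1

lemma not_isCrossing_image_of_subset {π : Finset (Finset ℕ)} {f : Finset ℕ → Finset ℕ}
    (hf : ∀ A ∈ π, f A ⊆ A) (hπ : ¬ IsCrossing π) : ¬ IsCrossing (π.image f) := by
  rintro ⟨_, hfA, _, hfB, hne, a, ha, b, hb, c, hc, d, hd, hab, hbc, hcd⟩
  obtain ⟨A, hA, rfl⟩ := mem_image.1 hfA
  obtain ⟨B, hB, rfl⟩ := mem_image.1 hfB
  exact hπ ⟨A, hA, B, hB, fun h => hne (h ▸ rfl), a, hf A hA ha, b, hf B hB hb, c, hf A hA hc,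
    d, hf B hB hd, hab, hbc, hcd⟩

namespace IsLinkedPartitionOfSet

variable {F : Finset ℕ} {π : Finset (Finset ℕ)} {A B C : Finset ℕ} {m n : ℕ}

lemma linked_of_mem (h : IsLinkedPartitionOfSet F π) (hA : A ∈ π) (hB : B ∈ π) (hAB : A ≠ B)
    (hmA : m ∈ A) (hmB : m ∈ B) : Linked A B :=
  (h.2.2.2 A hA B hB hAB).resolve_left (nonempty_iff_ne_empty.1 ⟨m, mem_inter.2 ⟨hmA, hmB⟩⟩)

lemma eq_of_fmin_eq (h : IsLinkedPartitionOfSet F π) (hA : A ∈ π) (hB : B ∈ π)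
    (heq : fmin A = fmin B) : A = B := by
  by_contra hAB
  exact (h.linked_of_mem hA hB hAB (fmin_mem (h.1 A hA)) (heq ▸ fmin_mem (h.1 B hB))).2.2.2.1 heq

lemma eq_of_one_mem (h : IsLinkedPartitionOfSet (Icc 1 n) π) (hA : A ∈ π) (hB : B ∈ π)
    (h1A : 1 ∈ A) (h1B : 1 ∈ B) : A = B :=
  h.eq_of_fmin_eq hA hB (by rw [fmin_eq_one (h.2.1 A hA) h1A, fmin_eq_one (h.2.1 B hB) h1B])

lemma singlyCovered_one (h : IsLinkedPartitionOfSet (Icc 1 n) π) (hA : A ∈ π) (h1 : 1 ∈ A) :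
    SinglyCovered π 1 :=
  (singlyCovered_iff hA h1).2 fun _ hB h1B => h.eq_of_one_mem hB hA h1B h1

lemma eq_of_mem_of_mem_of_mem (h : IsLinkedPartitionOfSet F π) (hA : A ∈ π) (hB : B ∈ π)
    (hC : C ∈ π) (hBA : B ≠ A) (hCA : C ≠ A) (hmA : m ∈ A) (hmB : m ∈ B) (hmC : m ∈ C) :
    B = C := by
  by_contra hBC
  obtain ⟨-, -, -, h₁, h₁'⟩ := h.linked_of_mem hA hB hBA.symm hmA hmB
  obtain ⟨-, -, -, h₂, h₂'⟩ := h.linked_of_mem hA hC hCA.symm hmA hmC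
  obtain ⟨-, -, -, h₃, h₃'⟩ := h.linked_of_mem hB hC hBC hmB hmC
  have := h₁' m (mem_inter.2 ⟨hmA, hmB⟩)
  have := h₂' m (mem_inter.2 ⟨hmA, hmC⟩)
  have := h₃' m (mem_inter.2 ⟨hmB, hmC⟩)
  omega

lemma exists_fmin_lt (h : IsLinkedPartitionOfSet F π) (hA : A ∈ π)
    (hs : ¬ SinglyCovered π (fmin A)) : ∃ B ∈ π, B ≠ A ∧ fmin A ∈ B ∧ fmin B < fmin A := by
  have hmA := fmin_mem (h.1 A hA)
  obtain ⟨B, hB, hmB, hBA⟩ : ∃ B ∈ π, fmin A ∈ B ∧ B ≠ A := by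
    simpa [singlyCovered_iff hA hmA] using hs
  obtain ⟨-, -, -, hne, -⟩ := h.linked_of_mem hA hB hBA.symm hmA hmB
  exact ⟨B, hB, hBA, hmB, lt_of_le_of_ne (fmin_le hmB) hne.symm⟩

lemma sup_id_eq (h : IsLinkedPartitionOfSet F π) : π.sup id = F :=
  Subset.antisymm (Finset.sup_le fun A hA => h.2.1 A hA) fun m hm => by
    obtain ⟨A, hA, hmA⟩ := h.2.2.1 m hm
    exact le_sup (f := id) hA hmA

lemma iff_of_genPart_eq_singleton (h : IsLinkedPartitionOfSet F π) (hconn : genPart π = {F})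
    {p : ℕ → Prop} (hp : ∀ A ∈ π, ∀ a ∈ A, ∀ b ∈ A, p a → p b) {a b : ℕ} (ha : a ∈ F)
    (hb : b ∈ F) : p a ↔ p b :=
  ((genPart_eq_singleton_iff h.sup_id_eq ⟨a, ha⟩).1 hconn a ha b hb).iff_of_rel_iff
    fun x y ⟨A, hA, hx, hy⟩ => ⟨hp A hA x hx y hy, hp A hA y hy x hx⟩

lemma blockGraph_connected (h : IsLinkedPartitionOfSet F π) (hconn : genPart π = {F})
    (hA : A ∈ π) : (blockGraph π).Connected := by
  have : Nonempty π := ⟨⟨A, hA⟩⟩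
  suffices hreach : ∀ B : π, (blockGraph π).Reachable ⟨A, hA⟩ B from
    .mk fun B C => (hreach B).symm.trans (hreach C)
  rintro ⟨B, hB⟩
  obtain ⟨a, ha⟩ := h.1 A hA
  obtain ⟨b, hb⟩ := h.1 B hB
  let p (m : ℕ) : Prop := ∃ C : π, m ∈ C.1 ∧ (blockGraph π).Reachable ⟨A, hA⟩ C
  have hp : ∀ C ∈ π, ∀ x ∈ C, ∀ y ∈ C, p x → p y := fun C hC x hx y hy ⟨D, hxD, hD⟩ =>
    ⟨⟨C, hC⟩, hy, hD.trans (blockGraph_reachable_of_mem (B := ⟨C, hC⟩) hxD hx)⟩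
  obtain ⟨C, hbC, hC⟩ := (h.iff_of_genPart_eq_singleton hconn hp (h.2.1 A hA ha)
    (h.2.1 B hB hb)).1 ⟨⟨A, hA⟩, ha, .refl _⟩
  exact hC.trans (blockGraph_reachable_of_mem (B := ⟨B, hB⟩) hbC hb)

theorem eq_of_singlyCovered_fmin (h : IsLinkedPartitionOfSet F π) (hconn : genPart π = {F})
    (hA : A ∈ π) (hB : B ∈ π) (hsA : SinglyCovered π (fmin A))
    (hsB : SinglyCovered π (fmin B)) : A = B := by
  by_contra hAB
  -- An edge `{C, C'}` is labelled by its common point, the minimum of exactly one of `C`, `C'`;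
  -- that block has a doubly covered minimum, and it determines the edge.
  let D : Finset π := univ.filter fun C => ¬ SinglyCovered π (fmin C.1)
  have hE : #(blockGraph π).edgeFinset ≤ #D := by
    refine card_le_card_of_forall_subsingleton
      (fun e C => ∃ C' : π, e = s(C, C') ∧ fmin C.1 ∈ C'.1) ?_ ?_
    · intro e he
      induction e using Sym2.ind with | _ C C' => ?_
      obtain ⟨hne, m, hm⟩ := blockGraph_adj.1 (SimpleGraph.mem_edgeFinset.1 he)
      obtain ⟨hmC, hmC'⟩ := mem_inter.1 hm
      have hCC' : C.1 ≠ C'.1 := Subtype.coe_injective.ne hne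
      have hns : ¬ SinglyCovered π m := by
        rw [singlyCovered_iff C.2 hmC]; exact fun hall => hCC' (hall C' C'.2 hmC').symm
      rcases (h.linked_of_mem C.2 C'.2 hCC' hmC hmC').2.2.2.2 m hm with rfl | rfl
      · exact ⟨C, mem_filter.2 ⟨mem_univ _, hns⟩, C', rfl, hmC'⟩
      · exact ⟨C', mem_filter.2 ⟨mem_univ _, hns⟩, C, Sym2.eq_swap, hmC⟩
    · rintro C - e₁ ⟨he₁, C₁, rfl, h₁⟩ e₂ ⟨he₂, C₂, rfl, h₂⟩
      have hne₁ := (blockGraph_adj.1 (SimpleGraph.mem_edgeFinset.1 he₁)).1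
      have hne₂ := (blockGraph_adj.1 (SimpleGraph.mem_edgeFinset.1 he₂)).1
      rw [Subtype.coe_injective (h.eq_of_mem_of_mem_of_mem C.2 C₁.2 C₂.2
        (Subtype.coe_injective.ne hne₁.symm) (Subtype.coe_injective.ne hne₂.symm)
        (fmin_mem (h.1 _ C.2)) h₁ h₂)]
  have hD : #D + 2 ≤ #π := by
    have hsub : D ⊆ (univ.erase ⟨A, hA⟩).erase ⟨B, hB⟩ := fun C hC => by
      have hC := (mem_filter.1 hC).2
      refine mem_erase.2 ⟨?_, mem_erase.2 ⟨?_, mem_univ _⟩⟩ <;> rintro rfl <;> contradiction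
    have := card_le_card hsub
    rw [card_erase_of_mem (mem_erase.2 ⟨fun h => hAB (congrArg Subtype.val h).symm, mem_univ _⟩),
      card_erase_of_mem (mem_univ _), card_univ, Fintype.card_coe] at this
    have : 2 ≤ #π := one_lt_card.2 ⟨A, hA, B, hB, hAB⟩
    omega
  have hG := (h.blockGraph_connected hconn hA).card_vert_le_card_edgeSet_add_one
  rw [Nat.card_eq_fintype_card, Fintype.card_coe, Nat.card_eq_fintype_card,
    ← SimpleGraph.edgeFinset_card] at hG
  omega

lemma singlyCovered_fmin_iff (h : IsLinkedPartitionOfSet (Icc 1 n) π)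
    (hconn : genPart π = {Icc 1 n}) (hA : A ∈ π) : SinglyCovered π (fmin A) ↔ 1 ∈ A := by
  refine ⟨fun hs => ?_, fun h1 => fmin_eq_one (h.2.1 A hA) h1 ▸ h.singlyCovered_one hA h1⟩
  have hA1 := mem_Icc.1 (h.2.1 A hA (fmin_mem (h.1 A hA)))
  obtain ⟨A₁, hA₁, h1A₁⟩ := h.2.2.1 1 (mem_Icc.2 ⟨le_rfl, hA1.1.trans hA1.2⟩)
  have hs₁ : SinglyCovered π (fmin A₁) :=
    fmin_eq_one (h.2.1 A₁ hA₁) h1A₁ ▸ h.singlyCovered_one hA₁ h1A₁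
  exact h.eq_of_singlyCovered_fmin hconn hA hA₁ hs hs₁ ▸ h1A₁

theorem isPartitionOfSet_unlink (h : IsLinkedPartitionOfSet F π) :
    IsPartitionOfSet F (unlink π) := by
  refine ⟨?_, ?_, fun m hm => ?_, ?_⟩
  · simp only [unlink_eq_image, forall_mem_image]
    intro A hA
    by_cases hs : SinglyCovered π (fmin A)
    · exact ⟨fmin A, mem_unlinkBlock.2 ⟨fmin_mem (h.1 A hA), fun _ => hs⟩⟩
    · obtain ⟨B, hB, hBA, hmB, -⟩ := h.exists_fmin_lt hA hs
      have h2 := (h.linked_of_mem hA hB hBA.symm (fmin_mem (h.1 A hA)) hmB).1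
      obtain ⟨x, hx, hxm⟩ := exists_mem_ne h2 (fmin A)
      exact ⟨x, mem_unlinkBlock.2 ⟨hx, fun h => absurd h hxm⟩⟩
  · simp only [unlink_eq_image, forall_mem_image]
    exact fun A hA => unlinkBlock_subset.trans (h.2.1 A hA)
  · obtain ⟨A, hA, hmA⟩ := h.2.2.1 m hm
    by_cases hmA' : m ∈ unlinkBlock π A
    · exact ⟨_, mem_image_of_mem _ hA, hmA'⟩
    · obtain ⟨rfl, hs⟩ : m = fmin A ∧ ¬ SinglyCovered π (fmin A) := by
        rw [mem_unlinkBlock] at hmA'; tauto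
      obtain ⟨B, hB, -, hmB, hlt⟩ := h.exists_fmin_lt hA hs
      exact ⟨_, mem_image_of_mem _ hB, mem_unlinkBlock.2 ⟨hmB, fun h => absurd h hlt.ne'⟩⟩
  · simp only [unlink_eq_image, forall_mem_image]
    intro A hA B hB hAB
    refine eq_empty_of_forall_notMem fun x hx => ?_
    obtain ⟨hxA, hxA'⟩ := mem_unlinkBlock.1 (mem_inter.1 hx).1
    obtain ⟨hxB, hxB'⟩ := mem_unlinkBlock.1 (mem_inter.1 hx).2
    have hAB : A ≠ B := fun h => hAB (h ▸ rfl)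
    have hns : ¬ SinglyCovered π x := by
      rw [singlyCovered_iff hA hxA]; exact fun hall => hAB (hall B hB hxB).symm
    rcases (h.linked_of_mem hA hB hAB hxA hxB).2.2.2.2 x (mem_inter.2 ⟨hxA, hxB⟩) with hx | hx
    · exact hns (hx ▸ hxA' hx)
    · exact hns (hx ▸ hxB' hx)

theorem exists_one_two_mem_unlink (h : IsLinkedPartitionOfSet (Icc 1 n) π)
    (hconn : genPart π = {Icc 1 n}) (hn : 2 ≤ n) : ∃ V ∈ unlink π, 1 ∈ V ∧ 2 ∈ V := by
  obtain ⟨A₁, hA₁, h1A₁⟩ := h.2.2.1 1 (mem_Icc.2 ⟨le_rfl, by omega⟩)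
  have hs₁ := (h.singlyCovered_fmin_iff hconn hA₁).2 h1A₁
  refine ⟨A₁, mem_image.2 ⟨A₁, hA₁, if_pos hs₁⟩, h1A₁, ?_⟩
  obtain ⟨B, hB, h2B⟩ := h.2.2.1 2 (mem_Icc.2 ⟨by omega, hn⟩)
  by_cases h1B : 1 ∈ B
  · exact h.eq_of_one_mem hB hA₁ h1B h1A₁ ▸ h2B
  -- Otherwise `2 = min B` is doubly covered, and its other block has minimum `1`.
  have hB2 : fmin B = 2 := by
    have := (mem_Icc.1 (h.2.1 B hB (fmin_mem ⟨2, h2B⟩))).1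
    have := fmin_le h2B
    have : fmin B ≠ 1 := fun h => h1B (h ▸ fmin_mem ⟨2, h2B⟩)
    omega
  obtain ⟨C, hC, -, h2C, hC1⟩ :=
    h.exists_fmin_lt hB (mt (h.singlyCovered_fmin_iff hconn hB).1 h1B)
  rw [hB2] at h2C hC1
  have hC1' : fmin C = 1 := by
    have := (mem_Icc.1 (h.2.1 C hC (fmin_mem ⟨2, h2C⟩))).1
    omega
  exact h.eq_of_one_mem hC hA₁ (hC1' ▸ fmin_mem ⟨2, h2C⟩) h1A₁ ▸ h2C

end IsLinkedPartitionOfSet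

theorem IsNCL.fmin_add_one_mem {n : ℕ} {π : Finset (Finset ℕ)} {A : Finset ℕ} (h : IsNCL n π)
    (hconn : genPart π = {Icc 1 n}) (hA : A ∈ π) (hs : ¬ SinglyCovered π (fmin A)) :
    fmin A + 1 ∈ A := by
  obtain ⟨hL, hnc⟩ := h
  obtain ⟨B, hB, hBA, hmB, hBlt⟩ := hL.exists_fmin_lt hA hs
  set m := fmin A
  have hmA : m ∈ A := fmin_mem (hL.1 A hA)
  have hne : (A.erase m).Nonempty := by
    have := (hL.linked_of_mem hA hB hBA.symm hmA hmB).1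
    rw [← card_pos, card_erase_of_mem hmA]; omega
  set m' := fmin (A.erase m)
  have hm'A : m' ∈ A := mem_of_mem_erase (fmin_mem hne)
  have hmm' : m < m' := lt_of_le_of_ne (fmin_le hm'A) (ne_of_mem_erase (fmin_mem hne)).symm
  have hgap : ∀ x ∈ A, m < x → m' ≤ x := fun x hx hmx => fmin_le (mem_erase.2 ⟨hmx.ne', hx⟩)
  by_contra hm1
  -- By non-crossing, the open interval `(m, m')` is a union of blocks; it contains `m + 1` but
  -- not `m`, which contradicts connectedness.
  have hclosed : ∀ C ∈ π, ∀ y ∈ C, ∀ z ∈ C, m < y ∧ y < m' → m < z ∧ z < m' := by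
    rintro C hC y hy z hz ⟨hmy, hym'⟩
    have hCA : C ≠ A := by rintro rfl; exact absurd (hgap y hy hmy) (by omega)
    have hlow : ¬ z ≤ m := fun hzm => by
      obtain ⟨w, hw, hwm⟩ : ∃ w ∈ C, w < m := by
        rcases hzm.lt_or_eq with hzm | hzm
        · exact ⟨z, hz, hzm⟩
        · obtain rfl := hL.eq_of_mem_of_mem_of_mem hA hB hC hBA hCA hmA hmB (hzm ▸ hz)
          exact ⟨fmin B, fmin_mem ⟨_, hmB⟩, hBlt⟩
      exact hnc ⟨C, hC, A, hA, hCA, w, hw, m, hmA, y, hy, m', hm'A, hwm, hmy, hym'⟩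
    have hhigh : ¬ m' < z := fun hz' =>
      hnc ⟨A, hA, C, hC, hCA.symm, m, hmA, y, hy, m', hm'A, z, hz, hmy, hym', hz'⟩
    have hz' : z ≠ m' := by
      intro hzm'
      rw [hzm'] at hz
      have := fmin_le hy
      have := (hL.linked_of_mem hC hA hCA hz hm'A).2.2.2.2 m' (mem_inter.2 ⟨hz, hm'A⟩)
      omega
    omega
  have hm1m' : m + 1 < m' := lt_of_le_of_ne hmm' fun h => hm1 (h ▸ hm'A)
  have hm1n : m + 1 ∈ Icc 1 n :=
    mem_Icc.2 ⟨by omega, (mem_Icc.1 (hL.2.1 A hA hm'A)).2.trans' hm1m'.le⟩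
  have := (hL.iff_of_genPart_eq_singleton hconn hclosed (hL.2.1 A hA hmA) hm1n).2
    ⟨m.lt_succ_self, hm1m'⟩
  omega

noncomputable def relinkBlock (V : Finset ℕ) : Finset ℕ :=
  if 1 ∈ V then V else insert (fmin V - 1) V

noncomputable def relink (α : Finset (Finset ℕ)) : Finset (Finset ℕ) := α.image relinkBlock

lemma mem_relinkBlock {V : Finset ℕ} {x : ℕ} :
    x ∈ relinkBlock V ↔ x ∈ V ∨ (1 ∉ V ∧ x = fmin V - 1) := by
  unfold relinkBlock
  split_ifs with h1
  · simp [h1]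
  · rw [mem_insert]; tauto

lemma subset_relinkBlock {V : Finset ℕ} : V ⊆ relinkBlock V :=
  fun _ hx => mem_relinkBlock.2 (Or.inl hx)

lemma fmin_relinkBlock {V : Finset ℕ} (h1 : 1 ∉ V) : fmin (relinkBlock V) = fmin V - 1 := by
  refine fmin_eq (mem_relinkBlock.2 (Or.inr ⟨h1, rfl⟩)) fun x hx => ?_
  rcases mem_relinkBlock.1 hx with hx | ⟨-, rfl⟩
  · exact (Nat.sub_le _ _).trans (fmin_le hx)
  · exact le_rfl

lemma exists_mem_near_of_mem_relinkBlock {V : Finset ℕ} (hV : V.Nonempty) {x : ℕ}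
    (hx : x ∈ relinkBlock V) : ∃ y ∈ V, x ≤ y ∧ y ≤ x + 1 := by
  rcases mem_relinkBlock.1 hx with hx | ⟨-, rfl⟩
  · exact ⟨x, hx, le_rfl, x.le_succ⟩
  · exact ⟨fmin V, fmin_mem hV, Nat.sub_le _ _, by omega⟩

lemma not_isCrossing_image_of_near {α : Finset (Finset ℕ)} {f : Finset ℕ → Finset ℕ}
    (hdisj : ∀ V ∈ α, ∀ W ∈ α, V ≠ W → V ∩ W = ∅)
    (hf : ∀ V ∈ α, ∀ x ∈ f V, ∃ y ∈ V, x ≤ y ∧ y ≤ x + 1) (hα : ¬ IsCrossing α) :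
    ¬ IsCrossing (α.image f) := by
  rintro ⟨_, hfV, _, hfW, hVW, a, ha, b, hb, c, hc, d, hd, hab, hbc, hcd⟩
  obtain ⟨V, hV, rfl⟩ := mem_image.1 hfV
  obtain ⟨W, hW, rfl⟩ := mem_image.1 hfW
  have hne : ∀ x ∈ V, ∀ y ∈ W, x ≠ y := fun x hx y hy hxy =>
    (eq_empty_iff_forall_notMem.1 (hdisj V hV W hW fun h => hVW (h ▸ rfl))) x
      (mem_inter.2 ⟨hx, hxy ▸ hy⟩)
  obtain ⟨a', ha', -, ha'a⟩ := hf V hV a ha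
  obtain ⟨b', hb', hbb', hb'b⟩ := hf W hW b hb
  obtain ⟨c', hc', hcc', hc'c⟩ := hf V hV c hc
  obtain ⟨d', hd', hdd', -⟩ := hf W hW d hd
  have := hne a' ha' b' hb'
  have := hne c' hc' b' hb'
  have := hne c' hc' d' hd'
  exact hα ⟨V, hV, W, hW, fun h => hVW (h ▸ rfl), a', ha', b', hb', c', hc', d', hd',
    by omega, by omega, by omega⟩

lemma IsPartitionOfSet.eq_of_mem {F : Finset ℕ} {α : Finset (Finset ℕ)}
    (hα : IsPartitionOfSet F α) {V W : Finset ℕ} (hV : V ∈ α) (hW : W ∈ α) {x : ℕ}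
    (hxV : x ∈ V) (hxW : x ∈ W) : V = W := by
  by_contra hne
  exact (eq_empty_iff_forall_notMem.1 (hα.2.2.2 V hV W hW hne)) x (mem_inter.2 ⟨hxV, hxW⟩)

namespace IsPartitionOf

variable {n : ℕ} {α : Finset (Finset ℕ)} {V W : Finset ℕ}

lemma three_le_fmin (hα : IsPartitionOf n α) (h12 : ∃ V ∈ α, 1 ∈ V ∧ 2 ∈ V) (hV : V ∈ α)
    (h1 : 1 ∉ V) : 3 ≤ fmin V := by
  obtain ⟨V₀, hV₀, h1V₀, h2V₀⟩ := h12
  have hmem := fmin_mem (hα.1 V hV)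
  have := (mem_Icc.1 (hα.2.1 V hV hmem)).1
  have : fmin V ≠ 1 := fun h => h1 (h ▸ hmem)
  have : fmin V ≠ 2 := fun h => h1 (hα.eq_of_mem hV hV₀ hmem (h ▸ h2V₀) ▸ h1V₀)
  omega

lemma linked_relinkBlock (hα : IsPartitionOf n α) (h12 : ∃ V ∈ α, 1 ∈ V ∧ 2 ∈ V) (hV : V ∈ α)
    (hW : W ∈ α) (hVW : V ≠ W) {x : ℕ} (hx : x ∈ relinkBlock V ∩ relinkBlock W) (hxV : x ∉ V) :
    Linked (relinkBlock V) (relinkBlock W) := by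
  obtain ⟨hxV', hxW'⟩ := mem_inter.1 hx
  obtain ⟨h1V, rfl⟩ : 1 ∉ V ∧ x = fmin V - 1 := (mem_relinkBlock.1 hxV').resolve_left hxV
  have hV3 := hα.three_le_fmin h12 hV h1V
  have hxW : fmin V - 1 ∈ W := by
    refine (mem_relinkBlock.1 hxW').resolve_right fun ⟨h1W, hVW'⟩ => hVW ?_
    have := hα.three_le_fmin h12 hW h1W
    have hfVW : fmin V = fmin W := by omega
    exact hα.eq_of_mem hV hW (fmin_mem (hα.1 V hV)) (hfVW ▸ fmin_mem (hα.1 W hW))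
  have hWV := fmin_le hxW
  refine linked_of_inter_eq_singleton ?_ ?_ ?_
  · rw [fmin_relinkBlock h1V]
    refine eq_singleton_iff_unique_mem.2 ⟨hx, fun y hy => ?_⟩
    obtain ⟨hyV, hyW⟩ := mem_inter.1 hy
    rcases mem_relinkBlock.1 hyV with hyV | ⟨-, rfl⟩
    · rcases mem_relinkBlock.1 hyW with hyW | ⟨-, rfl⟩
      · exact absurd (hα.eq_of_mem hV hW hyV hyW) hVW
      · have := fmin_le hyV; omega
    · rfl
  · rw [fmin_relinkBlock h1V]
    by_cases h1W : 1 ∈ W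
    · rw [relinkBlock, if_pos h1W, fmin_eq_one (hα.2.1 W hW) h1W]; omega
    · rw [fmin_relinkBlock h1W]; omega
  · rw [relinkBlock, if_neg h1V, card_insert_of_notMem fun h => by have := fmin_le h; omega]
    exact Nat.succ_le_succ (card_pos.2 (hα.1 V hV))

lemma relinkBlock_inter_eq_empty_or_linked (hα : IsPartitionOf n α)
    (h12 : ∃ V ∈ α, 1 ∈ V ∧ 2 ∈ V) (hV : V ∈ α) (hW : W ∈ α) (hVW : V ≠ W) :
    relinkBlock V ∩ relinkBlock W = ∅ ∨ Linked (relinkBlock V) (relinkBlock W) := by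
  rcases (relinkBlock V ∩ relinkBlock W).eq_empty_or_nonempty with h | ⟨x, hx⟩
  · exact Or.inl h
  by_cases hxV : x ∈ V
  · have hxW : x ∉ W := fun hxW => hVW (hα.eq_of_mem hV hW hxV hxW)
    rw [inter_comm] at hx
    exact Or.inr (hα.linked_relinkBlock h12 hW hV hVW.symm hx hxW).symm
  · exact Or.inr (hα.linked_relinkBlock h12 hV hW hVW hx hxV)

lemma relinkBlock_ne (hα : IsPartitionOf n α) (h12 : ∃ V ∈ α, 1 ∈ V ∧ 2 ∈ V) (hV : V ∈ α)
    (hW : W ∈ α) (hVW : V ≠ W) : relinkBlock V ≠ relinkBlock W := by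
  intro heq
  rcases hα.relinkBlock_inter_eq_empty_or_linked h12 hV hW hVW with h | h
  · rw [← heq, inter_self] at h
    exact ((hα.1 V hV).mono subset_relinkBlock).ne_empty h
  · exact h.2.2.2.1 (heq ▸ rfl)

theorem isLinkedPartitionOfSet_relink (hα : IsPartitionOf n α)
    (h12 : ∃ V ∈ α, 1 ∈ V ∧ 2 ∈ V) : IsLinkedPartitionOfSet (Icc 1 n) (relink α) := by
  refine ⟨?_, ?_, fun m hm => ?_, ?_⟩
  · simp only [relink, forall_mem_image]
    exact fun V hV => (hα.1 V hV).mono subset_relinkBlock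
  · simp only [relink, forall_mem_image]
    intro V hV x hx
    rcases mem_relinkBlock.1 hx with hx | ⟨h1V, rfl⟩
    · exact hα.2.1 V hV hx
    · have := hα.three_le_fmin h12 hV h1V
      have := (mem_Icc.1 (hα.2.1 V hV (fmin_mem (hα.1 V hV)))).2
      exact mem_Icc.2 ⟨by omega, by omega⟩
  · obtain ⟨V, hV, hmV⟩ := hα.2.2.1 m hm
    exact ⟨_, mem_image_of_mem _ hV, subset_relinkBlock hmV⟩
  · simp only [relink, forall_mem_image]
    exact fun V hV W hW hne =>
      hα.relinkBlock_inter_eq_empty_or_linked h12 hV hW fun h => hne (h ▸ rfl)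

theorem genPart_relink (hα : IsPartitionOf n α) (h12 : ∃ V ∈ α, 1 ∈ V ∧ 2 ∈ V) :
    genPart (relink α) = {Icc 1 n} := by
  have hL := hα.isLinkedPartitionOfSet_relink h12
  have h1 : 1 ∈ Icc 1 n := let ⟨V₀, hV₀, h1V₀, _⟩ := h12; hα.2.1 V₀ hV₀ h1V₀
  rw [genPart_eq_singleton_iff hL.sup_id_eq ⟨1, h1⟩]
  -- Every `m` is joined to `1` through the chain of new minima `min V - 1 < m`.
  suffices h : ∀ m ∈ Icc 1 n, Relation.EqvGen (SameBlock (relink α)) m 1 from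
    fun a ha b hb => (h a ha).trans _ _ _ ((h b hb).symm _ _)
  intro m
  induction m using Nat.strong_induction_on with
  | _ m ih =>
    intro hm
    obtain ⟨V, hV, hmV⟩ := hα.2.2.1 m hm
    have hVmem := mem_image_of_mem relinkBlock hV
    by_cases h1V : 1 ∈ V
    · exact .rel _ _ ⟨_, hVmem, subset_relinkBlock hmV, subset_relinkBlock h1V⟩
    · have := hα.three_le_fmin h12 hV h1V
      have := fmin_le hmV
      exact .trans _ _ _
        (.rel _ _ ⟨_, hVmem, subset_relinkBlock hmV, mem_relinkBlock.2 (Or.inr ⟨h1V, rfl⟩)⟩)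
        (ih _ (by omega) (mem_Icc.2 ⟨by omega, by have := (mem_Icc.1 hm).2; omega⟩))

theorem unlink_relink (hα : IsPartitionOf n α) (h12 : ∃ V ∈ α, 1 ∈ V ∧ 2 ∈ V) :
    unlink (relink α) = α := by
  have hL := hα.isLinkedPartitionOfSet_relink h12
  rw [unlink_eq_image]
  change (α.image relinkBlock).image (unlinkBlock (relink α)) = α
  rw [image_image]
  refine (image_congr fun V hV => ?_).trans image_id
  have hVmem : relinkBlock V ∈ relink α := mem_image_of_mem relinkBlock hV
  by_cases h1V : 1 ∈ V
  · have hrV : relinkBlock V = V := if_pos h1V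
    have hs := hL.singlyCovered_one hVmem (subset_relinkBlock h1V)
    rw [Function.comp_apply, hrV, unlinkBlock, fmin_eq_one (hα.2.1 V hV) h1V, if_pos hs, id]
  · have hV3 := hα.three_le_fmin h12 hV h1V
    have hv : fmin V - 1 ∈ Icc 1 n := mem_Icc.2 ⟨by omega,
      (Nat.sub_le _ _).trans (mem_Icc.1 (hα.2.1 V hV (fmin_mem (hα.1 V hV)))).2⟩
    obtain ⟨U, hU, hvU⟩ := hα.2.2.1 _ hv
    have hUV : U ≠ V := by rintro rfl; have := fmin_le hvU; omega
    have hns : ¬ SinglyCovered (relink α) (fmin V - 1) := by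
      rw [singlyCovered_iff hVmem (mem_relinkBlock.2 (Or.inr ⟨h1V, rfl⟩))]
      exact fun hall => hα.relinkBlock_ne h12 hU hV hUV
        (hall _ (mem_image_of_mem _ hU) (subset_relinkBlock hvU))
    rw [Function.comp_apply, unlinkBlock, fmin_relinkBlock h1V, if_neg hns, relinkBlock,
      if_neg h1V, erase_insert fun h => by have := fmin_le h; omega, id]

end IsPartitionOf

theorem IsNCPartition.not_isCrossing_relink {n : ℕ} {α : Finset (Finset ℕ)}
    (hα : IsNCPartition n α) : ¬ IsCrossing (relink α) :=
  not_isCrossing_image_of_near hα.1.2.2.2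
    (fun V hV _ hx => exists_mem_near_of_mem_relinkBlock (hα.1.1 V hV) hx) hα.2

theorem IsNCL.relink_unlink {n : ℕ} {π : Finset (Finset ℕ)} (h : IsNCL n π)
    (hconn : genPart π = {Icc 1 n}) : relink (unlink π) = π := by
  rw [unlink_eq_image, relink, image_image]
  refine (image_congr fun A hA => ?_).trans image_id
  rw [Function.comp_apply, unlinkBlock, id]
  by_cases hs : SinglyCovered π (fmin A)
  · rw [if_pos hs, relinkBlock, if_pos ((h.1.singlyCovered_fmin_iff hconn hA).1 hs)]
  · have h1 : 1 ∉ A.erase (fmin A) := fun h1 =>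
      hs ((h.1.singlyCovered_fmin_iff hconn hA).2 (mem_of_mem_erase h1))
    have hmin : fmin (A.erase (fmin A)) = fmin A + 1 := by
      refine fmin_eq (mem_erase.2 ⟨by omega, h.fmin_add_one_mem hconn hA hs⟩) fun x hx => ?_
      have := fmin_le (mem_of_mem_erase hx)
      have := ne_of_mem_erase hx
      omega
    rw [if_neg hs, relinkBlock, if_neg h1, hmin, Nat.add_sub_cancel,
      insert_erase (fmin_mem (h.1.1 A hA))]

/-- For every `n ≥ 2`, the map `π ↦ π̌` is a bijection from
`{π ∈ NCL(n) : π̂ = 1ₙ}` onto `{α ∈ NC(n) : 1 and 2 lie in the same block of α}`. -/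
theorem stmt10 (n : ℕ) (hn : 2 ≤ n) :
    Set.BijOn unlink
      {π : Finset (Finset ℕ) | IsNCL n π ∧ genPart π = {Finset.Icc 1 n}}
      {α : Finset (Finset ℕ) | IsNCPartition n α ∧ ∃ V ∈ α, 1 ∈ V ∧ 2 ∈ V} := by
  refine Set.InvOn.bijOn ⟨fun π ⟨hπ, hconn⟩ => hπ.relink_unlink hconn,
    fun α ⟨hα, h12⟩ => hα.1.unlink_relink h12⟩ ?_ ?_
  · rintro π ⟨hπ, hconn⟩
    exact ⟨⟨hπ.1.isPartitionOfSet_unlink, not_isCrossing_image_of_subset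
      (fun _ _ => unlinkBlock_subset) hπ.2⟩, hπ.1.exists_one_two_mem_unlink hconn hn⟩
  · rintro α ⟨hα, h12⟩
    exact ⟨⟨hα.1.isLinkedPartitionOfSet_relink h12, hα.not_isCrossing_relink⟩,
      hα.1.genPart_relink h12⟩
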